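/- Let {|ψ_k⟩⟨ψ_k|}_k be a family of rank-one projectors on a finite-dimensional Hilbert space H_A forming a linearly independent spanning set of the real vector space of Hermitian operators on H_A. If E : B(H_A) → B(H_A ⊗ H_S) is a linear map with E(|ψ_k⟩⟨ψ_k|) = |ψ_k⟩⟨ψ_k| ⊗ τ^{(k)} for states τ^{(k)}, and for every unit vector |ψ⟩ there exists a state τ_ψ with E(|ψ⟩⟨ψ|) = |ψ⟩⟨ψ| ⊗ τ_ψ, then all τ^{(k)} are equal to a single fixed state τ, and E(ρ) = ρ ⊗ τ for all ρ. -/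

import Mathlib

open Matrix Kronecker
open scoped ComplexOrder

/-- Time evolution unitary `e^{-iHt}`. -/
noncomputable def timeEvo {ι : Type} [Fintype ι] [DecidableEq ι]
    (H : Matrix ι ι ℂ) (t : ℝ) : Matrix ι ι ℂ :=
  NormedSpace.exp ((-(Complex.I * (t : ℂ))) • H)

/-- Conjugation `U M U†`. -/
noncomputable def uconj {ι : Type} [Fintype ι] (U M : Matrix ι ι ℂ) : Matrix ι ι ℂ :=
  U * M * Uᴴ

/-- A density operator: positive semidefinite with unit trace. -/
noncomputable def IsState {ι : Type} [Fintype ι] (ρ : Matrix ι ι ℂ) : Prop :=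
  ρ.PosSemidef ∧ ρ.trace = 1

/-- Choi matrix of a linear map. -/
noncomputable def choi {ι κ : Type} [Fintype ι] [DecidableEq ι] [Fintype κ]
    (E : Matrix ι ι ℂ →ₗ[ℂ] Matrix κ κ ℂ) : Matrix (ι × κ) (ι × κ) ℂ :=
  fun p q => E (Matrix.single p.1 q.1 1) p.2 q.2

/-- A quantum channel: completely positive (positive semidefinite Choi matrix)
and trace preserving. -/
noncomputable def IsCPTP {ι κ : Type} [Fintype ι] [DecidableEq ι] [Fintype κ]
    (E : Matrix ι ι ℂ →ₗ[ℂ] Matrix κ κ ℂ) : Prop :=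
  (choi E).PosSemidef ∧ ∀ M : Matrix ι ι ℂ, (E M).trace = M.trace

/-- Partial trace over the second (right) tensor factor. -/
noncomputable def ptraceRight {ι κ : Type} [Fintype ι] [Fintype κ]
    (M : Matrix (ι × κ) (ι × κ) ℂ) : Matrix ι ι ℂ :=
  fun i j => ∑ k, M (i, k) (j, k)

/-- Partial trace over the first (left) tensor factor. -/
noncomputable def ptraceLeft {ι κ : Type} [Fintype ι] [Fintype κ]
    (M : Matrix (ι × κ) (ι × κ) ℂ) : Matrix κ κ ℂ :=
  fun i j => ∑ k, M (k, i) (k, j)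

/-- Positive semidefinite square root, extended by `0` to non-PSD matrices. -/
noncomputable def msqrt {ι : Type} [Fintype ι] [DecidableEq ι]
    (M : Matrix ι ι ℂ) : Matrix ι ι ℂ :=
  @dite _ M.PosSemidef (Classical.propDecidable _) (fun h => (h.1.eigenvectorUnitary : Matrix ι ι ℂ) *
    Matrix.diagonal ((↑) ∘ Real.sqrt ∘ h.1.eigenvalues) *
    (star h.1.eigenvectorUnitary : Matrix ι ι ℂ)) (fun _ => 0)

/-- Trace norm `‖M‖₁ = Tr √(M†M)`. -/
noncomputable def traceNorm {ι : Type} [Fintype ι] [DecidableEq ι]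
    (M : Matrix ι ι ℂ) : ℝ :=
  (msqrt (Mᴴ * M)).trace.re

/-- Uhlmann fidelity `Fid(σ,τ) = ‖√σ√τ‖₁`. -/
noncomputable def Fid {ι : Type} [Fintype ι] [DecidableEq ι]
    (σ τ : Matrix ι ι ℂ) : ℝ :=
  traceNorm (msqrt σ * msqrt τ)

/-- Rank-one projector `|v⟩⟨v|` of a vector. -/
noncomputable def proj {ι : Type} (v : ι → ℂ) : Matrix ι ι ℂ :=
  Matrix.vecMulVec v (star v)

/-- The asymmetry monotone `f_t(ρ) = 1 - Fid(ρ, e^{-iHt} ρ e^{iHt})`. -/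
noncomputable def ft {ι : Type} [Fintype ι] [DecidableEq ι]
    (H : Matrix ι ι ℂ) (t : ℝ) (ρ : Matrix ι ι ℂ) : ℝ :=
  1 - Fid ρ (uconj (timeEvo H t) ρ)


set_option linter.unusedSectionVars false

section aux
variable {A : Type} [Fintype A] [DecidableEq A]

lemma proj_apply (w : A → ℂ) (i j : A) : proj w i j = w i * star (w j) := rfl

lemma proj_smul (c : ℂ) (w : A → ℂ) : proj (c • w) = (c * star c) • proj w := by
  ext i j
  simp only [proj_apply, Pi.smul_apply, smul_eq_mul, Matrix.smul_apply, star_mul']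
  ring

lemma vecMulVec_mulVec' (x y w : A → ℂ) : (Matrix.vecMulVec x y) *ᵥ w = (y ⬝ᵥ w) • x := by
  ext i
  simp only [Matrix.mulVec, dotProduct, Matrix.vecMulVec_apply, Pi.smul_apply,
    smul_eq_mul]
  rw [Finset.sum_mul]
  exact Finset.sum_congr rfl fun j _ => by ring

lemma indep_pair {ψ φ : A → ℂ} (hψ : ψ ≠ 0) (hind : ∀ c : ℂ, φ ≠ c • ψ)
    {c1 c2 : ℂ} (h : c1 • ψ + c2 • φ = 0) : c1 = 0 ∧ c2 = 0 := by
  by_cases hc2 : c2 = 0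
  · subst hc2
    simp only [zero_smul, add_zero] at h
    rcases smul_eq_zero.mp h with h | h
    · exact ⟨h, rfl⟩
    · exact absurd h hψ
  · exfalso
    apply hind (-(c1 / c2))
    have h2 : c2 • φ = (-c1) • ψ := by
      rw [neg_smul, eq_neg_iff_add_eq_zero, add_comm]; exact h
    have := congrArg (fun x => c2⁻¹ • x) h2
    simpa [smul_smul, inv_mul_cancel₀ hc2, neg_div, div_eq_inv_mul, mul_comm] using this
end aux

set_option linter.unusedSectionVars false

section aux2
variable {A : Type} [Fintype A] [DecidableEq A]

lemma key_indep {ψ φ : A → ℂ} (hψ : star ψ ⬝ᵥ ψ = 1) (hφ : star φ ⬝ᵥ φ = 1)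
    (hind : ∀ c : ℂ, φ ≠ c • ψ)
    {α β γ : ℂ}
    (h : α • proj ψ + β • proj φ
        + γ • (Matrix.vecMulVec ψ (star φ) + Matrix.vecMulVec φ (star ψ)) = 0) :
    α = 0 ∧ β = 0 ∧ γ = 0 := by
  have hψ0 : ψ ≠ 0 := by
    intro h0; rw [h0] at hψ; simp at hψ
  set t : ℂ := star ψ ⬝ᵥ φ with ht
  have hs : star φ ⬝ᵥ ψ = star t := Matrix.star_dotProduct φ ψ
  -- evaluate h on vectors
  have key : ∀ w : A → ℂ, (α * (star ψ ⬝ᵥ w) + γ * (star φ ⬝ᵥ w)) • ψ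
      + (β * (star φ ⬝ᵥ w) + γ * (star ψ ⬝ᵥ w)) • φ = 0 := by
    intro w
    have := congrArg (fun M => M *ᵥ w) h
    simp only [Matrix.add_mulVec, Matrix.smul_mulVec, Matrix.zero_mulVec, proj,
      vecMulVec_mulVec'] at this
    rw [← this]
    ext i
    simp only [Pi.add_apply, Pi.smul_apply, smul_eq_mul]
    ring
  have k1 := indep_pair hψ0 hind (key ψ)
  have k2 := indep_pair hψ0 hind (key φ)
  rw [hψ, hs] at k1
  rw [hφ, ← ht] at k2
  -- k1 : α * 1 + γ * star t = 0 ∧ β * star t + γ * 1 = 0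
  -- k2 : α * t + γ * 1 = 0 ∧ β * 1 + γ * t = 0
  have e1 : α + γ * star t = 0 := by simpa using k1.1
  have e2 : β * star t + γ = 0 := by simpa using k1.2
  have e3 : α * t + γ = 0 := by simpa using k2.1
  have e4 : β + γ * t = 0 := by simpa using k2.2
  have hγ : γ = 0 := by
    by_contra hγ
    have hst : star t * t = 1 := by
      have : γ * (1 - star t * t) = 0 := by linear_combination e3 - t * e1
      rcases mul_eq_zero.mp this with h' | h'
      · exact absurd h' hγ
      · linear_combination -h'
    apply hind t
    have hu : star (φ - t • ψ) ⬝ᵥ (φ - t • ψ) = 0 := by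
      have hstar : star (φ - t • ψ) = star φ - star t • star ψ := by
        ext i; simp [star_sub, Pi.smul_apply]
      rw [hstar]
      simp only [sub_dotProduct, dotProduct_sub, smul_dotProduct,
        dotProduct_smul, smul_eq_mul, hφ, hψ, hs, ← ht]
      linear_combination -hst
    have := dotProduct_star_self_eq_zero.mp hu
    rw [sub_eq_zero] at this
    exact this
  refine ⟨?_, ?_, hγ⟩
  · linear_combination e1 - star t * hγ
  · linear_combination e4 - t * hγ
end aux2

section pair
variable {A S : Type} [Fintype A] [DecidableEq A] [Fintype S] [DecidableEq S]

lemma proj_nonzero_broadcast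
    (E : Matrix A A ℂ →ₗ[ℂ] Matrix (A × S) (A × S) ℂ)
    (hpure : ∀ ψ : A → ℂ, star ψ ⬝ᵥ ψ = 1 →
      ∃ τψ : Matrix S S ℂ, IsState τψ ∧ E (proj ψ) = proj ψ ⊗ₖ τψ)
    {w : A → ℂ} (hw : w ≠ 0) :
    ∃ τw : Matrix S S ℂ, IsState τw ∧ E (proj w) = proj w ⊗ₖ τw := by
  set n : ℝ := ∑ i, Complex.normSq (w i) with hn
  have hdot : star w ⬝ᵥ w = (n : ℂ) := by
    rw [hn]
    push_cast
    simp only [dotProduct, Pi.star_apply]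
    exact Finset.sum_congr rfl fun i _ => by
      rw [mul_comm, Complex.star_def, Complex.mul_conj]
  have hn0 : n ≠ 0 := by
    intro h
    exact hw (dotProduct_star_self_eq_zero.mp (by rw [hdot, h]; simp))
  have hnpos : 0 < n :=
    lt_of_le_of_ne (Finset.sum_nonneg fun i _ => Complex.normSq_nonneg _) (Ne.symm hn0)
  set r : ℝ := Real.sqrt n with hrdef
  have hr : 0 < r := Real.sqrt_pos.mpr hnpos
  have hr2 : r * r = n := Real.mul_self_sqrt hnpos.le
  set c : ℂ := ((r⁻¹ : ℝ) : ℂ) with hc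
  have hcunit : star (c • w) ⬝ᵥ (c • w) = 1 := by
    have hstarc : star (c • w) = c • star w := by
      ext i; simp [hc, Complex.conj_ofReal]
    rw [hstarc, smul_dotProduct, dotProduct_smul, hdot, smul_eq_mul,
      smul_eq_mul, hc]
    have hrne : (r : ℂ) ≠ 0 := by exact_mod_cast hr.ne'
    rw [← hr2]
    push_cast
    field_simp
  obtain ⟨τw, hstate, hE⟩ := hpure (c • w) hcunit
  rw [proj_smul] at hE
  have hcc : c * star c = (((r⁻¹ * r⁻¹ : ℝ)) : ℂ) := by
    rw [hc, Complex.star_def, Complex.conj_ofReal]; push_cast; ring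
  rw [hcc] at hE
  refine ⟨τw, hstate, ?_⟩
  have hcc0 : (((r⁻¹ * r⁻¹ : ℝ)) : ℂ) ≠ 0 := by
    simp [Complex.ofReal_ne_zero, hr.ne']
  apply smul_right_injective (Matrix (A × S) (A × S) ℂ) hcc0
  dsimp only
  rw [← E.map_smul, hE, Matrix.smul_kronecker]

lemma pair_tau_eq
    (E : Matrix A A ℂ →ₗ[ℂ] Matrix (A × S) (A × S) ℂ)
    (hpure : ∀ ψ : A → ℂ, star ψ ⬝ᵥ ψ = 1 →
      ∃ τψ : Matrix S S ℂ, IsState τψ ∧ E (proj ψ) = proj ψ ⊗ₖ τψ)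
    {ψ φ : A → ℂ} (hψ : star ψ ⬝ᵥ ψ = 1) (hφ : star φ ⬝ᵥ φ = 1)
    (hind : ∀ c : ℂ, φ ≠ c • ψ)
    {τψ τφ : Matrix S S ℂ}
    (hEψ : E (proj ψ) = proj ψ ⊗ₖ τψ) (hEφ : E (proj φ) = proj φ ⊗ₖ τφ) :
    τψ = τφ := by
  have hp : ψ + φ ≠ 0 := by
    intro h
    exact hind (-1) (by rw [neg_one_smul, eq_neg_iff_add_eq_zero, add_comm]; exact h)
  have hm : ψ - φ ≠ 0 := by
    intro h
    exact hind 1 (by rw [one_smul]; exact (sub_eq_zero.mp h).symm)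
  obtain ⟨τp, _, hEp⟩ := proj_nonzero_broadcast E hpure hp
  obtain ⟨τm, _, hEm⟩ := proj_nonzero_broadcast E hpure hm
  have hsum : proj (ψ + φ) + proj (ψ - φ) = (2:ℂ) • proj ψ + (2:ℂ) • proj φ := by
    ext i j
    simp only [Matrix.add_apply, Matrix.smul_apply, proj_apply, Pi.add_apply, Pi.sub_apply,
      star_add, star_sub, Pi.star_apply, smul_eq_mul]
    ring
  have big : proj (ψ+φ) ⊗ₖ τp + proj (ψ-φ) ⊗ₖ τm
      = (2:ℂ) • (proj ψ ⊗ₖ τψ) + (2:ℂ) • (proj φ ⊗ₖ τφ) := by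
    rw [← hEp, ← hEm, ← map_add, hsum]
    rw [map_add, _root_.map_smul, _root_.map_smul, hEψ, hEφ]
  ext s s'
  have hzero : (2 * τψ s s' - τp s s' - τm s s') • proj ψ
      + (2 * τφ s s' - τp s s' - τm s s') • proj φ
      + (τm s s' - τp s s') • (Matrix.vecMulVec ψ (star φ) + Matrix.vecMulVec φ (star ψ)) = 0 := by
    ext i j
    have he := congrFun (congrFun big (i, s)) (j, s')
    simp only [Matrix.add_apply, Matrix.smul_apply, Matrix.kroneckerMap_apply, proj_apply,
      Pi.add_apply, Pi.sub_apply, star_add, star_sub, Pi.star_apply, smul_eq_mul,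
      Matrix.vecMulVec_apply, Matrix.zero_apply] at he ⊢
    linear_combination -he
  obtain ⟨ha, hb, _⟩ := key_indep hψ hφ hind hzero
  linear_combination (ha - hb) / 2
end pair


/-- Linearity argument: a broadcaster that preserves every pure state on the first
output and acts as `ψ ↦ ψ ⊗ τ^{(k)}` on a linearly independent spanning family of
pure-state projectors must have all `τ^{(k)}` equal, and be `ρ ↦ ρ ⊗ τ` globally. -/
theorem universal_broadcaster_trivial_second_output
    {A S : Type} [Fintype A] [DecidableEq A] [Nonempty A] [Fintype S] [DecidableEq S]
    (ι : Type) [Fintype ι]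
    (v : ι → (A → ℂ)) (hunit : ∀ k, star (v k) ⬝ᵥ v k = 1)
    (hspan : ∀ M : Matrix A A ℂ, M.IsHermitian →
      ∃ c : ι → ℝ, M = ∑ k, (c k : ℂ) • proj (v k))
    (hindep : ∀ c : ι → ℝ, (∑ k, (c k : ℂ) • proj (v k)) = 0 → c = 0)
    (E : Matrix A A ℂ →ₗ[ℂ] Matrix (A × S) (A × S) ℂ)
    (τ : ι → Matrix S S ℂ)
    (hτ : ∀ k, IsState (τ k) ∧ E (proj (v k)) = proj (v k) ⊗ₖ τ k)
    (hpure : ∀ ψ : A → ℂ, star ψ ⬝ᵥ ψ = 1 →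
      ∃ τψ : Matrix S S ℂ, IsState τψ ∧ E (proj ψ) = proj ψ ⊗ₖ τψ) :
    ∃ τ0 : Matrix S S ℂ, IsState τ0 ∧ (∀ k, τ k = τ0) ∧
      ∀ ρ : Matrix A A ℂ, E ρ = ρ ⊗ₖ τ0 := by
  classical
  have hι : Nonempty ι := by
    by_contra hno
    rw [not_nonempty_iff] at hno
    obtain ⟨c, hc⟩ := hspan 1 Matrix.isHermitian_one
    rw [Finset.univ_eq_empty, Finset.sum_empty] at hc
    have a := Classical.arbitrary A
    have := congrFun (congrFun hc a) a
    simp [Matrix.one_apply] at this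
  obtain ⟨k0⟩ := hι
  have hind : ∀ j k : ι, j ≠ k → ∀ c : ℂ, v k ≠ c • v j := by
    intro j k hjk c hc
    have hcc : c * star c = 1 := by
      have hu := hunit k
      rw [hc] at hu
      have hsc : star (c • v j) = star c • star (v j) := by ext i; simp
      rw [hsc, smul_dotProduct, dotProduct_smul, hunit j, smul_eq_mul,
        smul_eq_mul, mul_one] at hu
      rw [mul_comm]; exact hu
    have hproj : proj (v k) = proj (v j) := by
      rw [hc, proj_smul, hcc, one_smul]
    set cf : ι → ℝ := fun m => (if m = j then 1 else 0) - (if m = k then 1 else 0) with hcf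
    have hsummand : ∀ m, (cf m : ℂ) • proj (v m)
        = (if m = j then proj (v j) else 0) - (if m = k then proj (v k) else 0) := by
      intro m
      rcases eq_or_ne m j with rfl | h1
      · rcases eq_or_ne m k with h2 | h2
        · exact absurd h2 hjk
        · simp [hcf, h2]
      · rcases eq_or_ne m k with rfl | h2
        · simp [hcf, h1]
        · simp [hcf, h1, h2]
    have hzero : (∑ m, (cf m : ℂ) • proj (v m)) = 0 := by
      rw [Finset.sum_congr rfl fun m _ => hsummand m, Finset.sum_sub_distrib,
        Finset.sum_ite_eq' Finset.univ j, Finset.sum_ite_eq' Finset.univ k]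
      simp [hproj]
    have := congrFun (hindep cf hzero) j
    simp [hcf, hjk] at this
  have hτeq : ∀ k, τ k = τ k0 := by
    intro k
    rcases eq_or_ne k k0 with rfl | hk
    · rfl
    · exact pair_tau_eq E hpure (hunit k) (hunit k0) (hind k k0 hk) (hτ k).2 (hτ k0).2
  have hherm : ∀ M : Matrix A A ℂ, M.IsHermitian → E M = M ⊗ₖ τ k0 := by
    intro M hM
    obtain ⟨c, hc⟩ := hspan M hM
    rw [hc, map_sum]
    have hterm : ∀ k : ι, E ((c k : ℂ) • proj (v k)) = ((c k : ℂ) • proj (v k)) ⊗ₖ τ k0 := by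
      intro k
      rw [_root_.map_smul, (hτ k).2, hτeq k, Matrix.smul_kronecker]
    rw [Finset.sum_congr rfl fun k _ => hterm k]
    ext ⟨i, s⟩ ⟨j, s'⟩
    simp [Matrix.sum_apply, Matrix.kroneckerMap_apply, Finset.sum_mul]
  refine ⟨τ k0, (hτ k0).1, hτeq, ?_⟩
  intro ρ
  set H1 : Matrix A A ℂ := ((1:ℂ)/2) • (ρ + ρᴴ) with hH1def
  set H2 : Matrix A A ℂ := (Complex.I/2) • (ρᴴ - ρ) with hH2def
  have hH1 : H1.IsHermitian := by
    rw [Matrix.IsHermitian, hH1def, Matrix.conjTranspose_smul, Matrix.conjTranspose_add,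
      Matrix.conjTranspose_conjTranspose]
    rw [add_comm]
    congr 1
    simp
  have hH2 : H2.IsHermitian := by
    rw [Matrix.IsHermitian, hH2def, Matrix.conjTranspose_smul, Matrix.conjTranspose_sub,
      Matrix.conjTranspose_conjTranspose]
    have : star (Complex.I / 2) = -(Complex.I / 2) := by
      simp [Complex.ext_iff]
      norm_num
    rw [this]
    module
  have hρ : ρ = H1 + Complex.I • H2 := by
    rw [hH1def, hH2def]
    rw [smul_smul]
    have : Complex.I * (Complex.I / 2) = -(1/2 : ℂ) := by
      rw [← mul_div_assoc, Complex.I_mul_I]; norm_num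
    rw [this]
    module
  rw [hρ, map_add, hherm H1 hH1, _root_.map_smul, hherm H2 hH2]
  simp [Matrix.add_kronecker, Matrix.smul_kronecker]
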